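/- For every D >= 1 there exists an RNN R = Q∘K with input dimension 1, output dimension 1, and hidden state size 7 such that for all x in [-D, D] and all t in N_0: |(R D x)[t] - x^2| <= (D^2/4) * 4^{-t}, the hidden state satisfies ‖(K D x)[t]‖_∞ <= 1, and the output satisfies 0 <= (R D x)[t] <= D^2. -/

import Mathlib

/-- ReLU applied componentwise. -/
noncomputable def relu {n : Type*} (v : n → ℝ) : n → ℝ := fun i => max 0 (v i)

/-- An RNN with input index type `ι`, hidden state index type `κ`, output index type `ω`,
parametrized by weights `A_h, A_x, A_o, b_h, b_o`. -/
structure RNN (ι κ ω : Type) where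
  Ah : Matrix κ κ ℝ
  Ax : Matrix κ ι ℝ
  Ao : Matrix ω κ ℝ
  bh : κ → ℝ
  bo : ω → ℝ

/-- Hidden state sequence `(K 𝒟 x)[t]` for the input sequence `(𝒟 x)[t] = x·1{t=0}`,
with the convention `h[-1] = 0`:  `h[0] = ρ(A_x x + b_h)`, `h[t+1] = ρ(A_h h[t] + b_h)`. -/
noncomputable def RNN.hid {ι κ ω : Type} [Fintype ι] [Fintype κ] (R : RNN ι κ ω)
    (x : ι → ℝ) : ℕ → κ → ℝ
  | 0 => relu (R.Ax.mulVec x + R.bh)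
  | t + 1 => relu (R.Ah.mulVec (RNN.hid R x t) + R.bh)

/-- Output sequence `(R 𝒟 x)[t] = A_o h[t] + b_o`. -/
noncomputable def RNN.out {ι κ ω : Type} [Fintype ι] [Fintype κ] (R : RNN ι κ ω)
    (x : ι → ℝ) (t : ℕ) : ω → ℝ :=
  R.Ao.mulVec (R.hid x t) + R.bo

/-!
Put `y = |x / D| ∈ [0, 1]` and let `g` be the tent map. Since `g(u)² = 4u² - 8 ρ(u - 1/2)`, the
quantity `y² - 4⁻ᵗ (gᵗ y)²` is a sum of terms `2·4⁻ˢ ρ(gˢ y - 1/2)`, which one neuron can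
accumulate while others track `4⁻ᵗ gᵗ y`, `4⁻ᵗ ρ(gᵗ y - 1/2)` and the scale `4⁻ᵗ`. Reading out
`D² (4⁻ᵗ gᵗ y + y² - 4⁻ᵗ (gᵗ y)²)` gives `x² + D² 4⁻ᵗ gᵗ y (1 - gᵗ y)`, which overshoots `x²` by
at most `D² 4⁻ᵗ / 4`. As `g(u)(2 - g(u)) = 4u(1 - u)`, the overshoot decreases in `t`, so the
output stays below its value `D² y ≤ D²` at `t = 0`.
-/

noncomputable def tent (u : ℝ) : ℝ := 2 * u - 4 * max 0 (u - 1 / 2)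

lemma tent_of_le_half {u : ℝ} (h : u ≤ 1 / 2) : tent u = 2 * u := by
  rw [tent, max_eq_left (by linarith)]; ring

lemma tent_of_half_le {u : ℝ} (h : 1 / 2 ≤ u) : tent u = 2 - 2 * u := by
  rw [tent, max_eq_right (by linarith)]; ring

lemma tent_le_two_mul (u : ℝ) : tent u ≤ 2 * u := by
  have := le_max_left 0 (u - 1 / 2)
  rw [tent]; linarith

lemma tent_sq (u : ℝ) : tent u ^ 2 = 4 * u ^ 2 - 8 * max 0 (u - 1 / 2) := by
  rcases le_total u (1 / 2) with h | h
  · rw [tent_of_le_half h, max_eq_left (by linarith)]; ring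
  · rw [tent_of_half_le h, max_eq_right (by linarith)]; ring

lemma tent_mul_two_sub (u : ℝ) : tent u * (2 - tent u) = 4 * (u * (1 - u)) := by
  rcases le_total u (1 / 2) with h | h
  · rw [tent_of_le_half h]; ring
  · rw [tent_of_half_le h]; ring

lemma mapsTo_tent : Set.MapsTo tent (Set.Icc 0 1) (Set.Icc 0 1) := by
  rintro u ⟨h0, h1⟩
  rcases le_total u (1 / 2) with h | h
  · rw [tent_of_le_half h]; constructor <;> linarith
  · rw [tent_of_half_le h]; constructor <;> linarith

lemma iterate_tent_le (y : ℝ) (t : ℕ) : tent^[t] y ≤ 2 ^ t * y := by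
  induction t with
  | zero => simp
  | succ t ih =>
    rw [Function.iterate_succ_apply', pow_succ']
    linarith [tent_le_two_mul (tent^[t] y)]

lemma inv_four_pow_mul_sq_iterate_tent_le {y : ℝ} (hy : y ∈ Set.Icc 0 1) (t : ℕ) :
    4⁻¹ ^ t * (tent^[t] y) ^ 2 ≤ y ^ 2 := by
  have hG := (mapsTo_tent.iterate t hy).1
  calc 4⁻¹ ^ t * (tent^[t] y) ^ 2 ≤ 4⁻¹ ^ t * (2 ^ t * y) ^ 2 := by
        gcongr; exact iterate_tent_le y t
    _ = y ^ 2 := by rw [mul_pow, ← pow_mul, mul_comm t, pow_mul, ← mul_assoc, ← mul_pow]; norm_num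

noncomputable def sqError (y : ℝ) (t : ℕ) : ℝ := 4⁻¹ ^ t * (tent^[t] y * (1 - tent^[t] y))

lemma sqError_nonneg {y : ℝ} (hy : y ∈ Set.Icc 0 1) (t : ℕ) : 0 ≤ sqError y t := by
  obtain ⟨h0, h1⟩ := mapsTo_tent.iterate t hy
  unfold sqError
  have : 0 ≤ 1 - tent^[t] y := by linarith
  positivity

lemma sqError_le (y : ℝ) (t : ℕ) : sqError y t ≤ 4⁻¹ ^ t / 4 := by
  have : tent^[t] y * (1 - tent^[t] y) ≤ 1 / 4 := by nlinarith [sq_nonneg (tent^[t] y - 1 / 2)]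
  calc sqError y t ≤ 4⁻¹ ^ t * (1 / 4) := by unfold sqError; gcongr
    _ = 4⁻¹ ^ t / 4 := by ring

lemma sqError_antitone {y : ℝ} (hy : y ∈ Set.Icc 0 1) : Antitone (sqError y) := by
  refine antitone_nat_of_succ_le fun t => ?_
  set G := tent^[t] y
  have hG' : 0 ≤ tent G := (mapsTo_tent (mapsTo_tent.iterate t hy)).1
  calc sqError y (t + 1) = 4⁻¹ ^ t / 4 * (tent G * (1 - tent G)) := by
        rw [sqError, Function.iterate_succ_apply', pow_succ]; ring
    _ ≤ 4⁻¹ ^ t / 4 * (tent G * (2 - tent G)) := by gcongr; linarith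
    _ = sqError y t := by rw [tent_mul_two_sub, sqError]; ring

lemma sq_add_sqError_le {y : ℝ} (hy : y ∈ Set.Icc 0 1) (t : ℕ) : y ^ 2 + sqError y t ≤ y := by
  have h0 : sqError y 0 = y * (1 - y) := by simp [sqError]
  linarith [sqError_antitone hy (Nat.zero_le t)]

lemma max_zero_sub_add_max_zero_neg_sub {r : ℝ} (hr : 0 ≤ r) (a : ℝ) :
    max 0 (a - r) + max 0 (-a - r) = max 0 (|a| - r) := by
  rcases le_total a 0 with h | h
  · rw [abs_of_nonpos h, max_eq_left (by linarith : a - r ≤ 0), zero_add]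
  · rw [abs_of_nonneg h, max_eq_left (by linarith : -a - r ≤ 0), add_zero]

lemma relu_apply {n : Type*} (v : n → ℝ) (i : n) : relu v i = max 0 (v i) := rfl

lemma RNN.hid_nonneg {ι κ ω : Type} [Fintype ι] [Fintype κ] (R : RNN ι κ ω) (x : ι → ℝ)
    (t : ℕ) (k : κ) : 0 ≤ R.hid x t k := by
  cases t <;> exact le_max_left _ _

/- At `t = 0` the pairs of neurons 0, 1 and 2, 3 hold the positive and negative parts of `x / D`
and `x / D ∓ 1/2`, so that their sums only depend on `|x / D|`; afterwards neurons 1 and 3 are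
zero. Neuron 4 is the accumulator, 5 the scale `4⁻ᵗ`, 6 the constant `1`; the biases serve the
first step and are cancelled later through neuron 6. -/
noncomputable def sqRNN (D : ℝ) : RNN (Fin 1) (Fin 7) (Fin 1) where
  Ah := !![1/2, 1/2, -1, -1, 0, 0, 0;
           0, 0, 0, 0, 0, 0, 0;
           1/2, 1/2, -1, -1, 0, -(1/8), 1/2;
           0, 0, 0, 0, 0, 0, 0;
           0, 0, 2, 2, 1, 0, 0;
           0, 0, 0, 0, 0, 1/4, -1;
           0, 0, 0, 0, 0, 0, 0]
  Ax := !![1/D; -(1/D); 1/D; -(1/D); 0; 0; 0]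
  Ao := !![D^2, D^2, 0, 0, D^2, 0, 0]
  bh := ![0, 0, -(1/2), -(1/2), 0, 1, 1]
  bo := ![0]

lemma sqRNN_preact_zero (D x : ℝ) :
    (sqRNN D).Ax.mulVec (fun _ => x) + (sqRNN D).bh
      = ![x / D, -(x / D), x / D - 1 / 2, -(x / D) - 1 / 2, 0, 1, 1] := by
  ext i; fin_cases i <;> simp [sqRNN, dotProduct] <;> ring

lemma sqRNN_preact_succ (D : ℝ) (h : Fin 7 → ℝ) :
    (sqRNN D).Ah.mulVec h + (sqRNN D).bh
      = ![(h 0 + h 1) / 2 - (h 2 + h 3), 0,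
          (h 0 + h 1) / 2 - (h 2 + h 3) - h 5 / 8 + (h 6 - 1) / 2, -(1 / 2),
          2 * (h 2 + h 3) + h 4, h 5 / 4 - (h 6 - 1), 1] := by
  ext i; fin_cases i <;> simp [sqRNN, dotProduct, Fin.sum_univ_seven] <;> ring

lemma sqRNN_out (D x : ℝ) (t : ℕ) :
    (sqRNN D).out (fun _ => x) t 0
      = D ^ 2 * ((sqRNN D).hid (fun _ => x) t 0 + (sqRNN D).hid (fun _ => x) t 1
          + (sqRNN D).hid (fun _ => x) t 4) := by
  simp [RNN.out, sqRNN, dotProduct, Fin.sum_univ_seven]; ring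

structure IsSqRNNState (y : ℝ) (t : ℕ) (h : Fin 7 → ℝ) : Prop where
  val : h 0 + h 1 = 4⁻¹ ^ t * tent^[t] y
  excess : h 2 + h 3 = 4⁻¹ ^ t * max 0 (tent^[t] y - 1 / 2)
  acc : h 4 = y ^ 2 - 4⁻¹ ^ t * (tent^[t] y) ^ 2
  scale : h 5 = 4⁻¹ ^ t
  one : h 6 = 1

lemma isSqRNNState_hid_zero (D x : ℝ) :
    IsSqRNNState |x / D| 0 ((sqRNN D).hid (fun _ => x) 0) := by
  constructor <;> simp only [RNN.hid, sqRNN_preact_zero, relu_apply] <;> simp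
  · rw [max_comm 0, max_comm 0, max_zero_add_max_neg_zero_eq_abs_self]
  · exact max_zero_sub_add_max_zero_neg_sub (by norm_num) _

lemma IsSqRNNState.succ {D y : ℝ} (hy : y ∈ Set.Icc 0 1) {t : ℕ} {h : Fin 7 → ℝ}
    (hs : IsSqRNNState y t h) :
    IsSqRNNState y (t + 1) (relu ((sqRNN D).Ah.mulVec h + (sqRNN D).bh)) := by
  set G := tent^[t] y
  set c : ℝ := 4⁻¹ ^ (t + 1)
  have hpre : (sqRNN D).Ah.mulVec h + (sqRNN D).bh
      = ![c * tent G, 0, c * (tent G - 1 / 2), -(1 / 2), y ^ 2 - c * tent G ^ 2, c, 1] := by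
    rw [sqRNN_preact_succ, hs.val, hs.excess, hs.acc, hs.scale, hs.one, tent_sq]
    ext i; fin_cases i <;> simp [c, pow_succ, tent] <;> ring
  have hc : 0 ≤ c := by positivity
  have hG : 0 ≤ tent G := (mapsTo_tent (mapsTo_tent.iterate t hy)).1
  have hacc := inv_four_pow_mul_sq_iterate_tent_le hy (t + 1)
  rw [Function.iterate_succ_apply'] at hacc
  constructor <;> simp only [hpre, relu_apply, Matrix.cons_val, Function.iterate_succ_apply']
  · rw [max_eq_right (mul_nonneg hc hG), max_self, add_zero]
  · rw [max_eq_left (by norm_num : -(1 / 2 : ℝ) ≤ 0), add_zero, mul_max_of_nonneg _ _ hc,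
      mul_zero]
  · exact max_eq_right (sub_nonneg.2 hacc)
  · exact max_eq_right hc
  · exact max_eq_right zero_le_one

lemma isSqRNNState_hid {D x : ℝ} (hy : |x / D| ∈ Set.Icc 0 1) (t : ℕ) :
    IsSqRNNState |x / D| t ((sqRNN D).hid (fun _ => x) t) := by
  induction t with
  | zero => exact isSqRNNState_hid_zero D x
  | succ t ih => exact ih.succ hy

lemma IsSqRNNState.norm_le_one {y : ℝ} (hy : y ∈ Set.Icc 0 1) {t : ℕ} {h : Fin 7 → ℝ}
    (hs : IsSqRNNState y t h) (hnn : ∀ k, 0 ≤ h k) : ‖h‖ ≤ 1 := by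
  obtain ⟨hG0, hG1⟩ := mapsTo_tent.iterate t hy
  have hc1 : (4⁻¹ : ℝ) ^ t ≤ 1 := pow_le_one₀ (by norm_num) (by norm_num)
  have hval : 4⁻¹ ^ t * tent^[t] y ≤ 1 := mul_le_one₀ hc1 hG0 hG1
  have hexcess : 4⁻¹ ^ t * max 0 (tent^[t] y - 1 / 2) ≤ 1 :=
    mul_le_one₀ hc1 (le_max_left _ _) (max_le zero_le_one (by linarith))
  have hacc : 0 ≤ 4⁻¹ ^ t * (tent^[t] y) ^ 2 := by positivity
  have hy2 : y ^ 2 ≤ 1 := pow_le_one₀ hy.1 hy.2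
  refine (pi_norm_le_iff_of_nonneg zero_le_one).2 fun k => ?_
  rw [Real.norm_of_nonneg (hnn k)]
  fin_cases k <;> simp <;>
    linarith [hs.val, hs.excess, hs.acc, hs.scale, hs.one, hnn 0, hnn 1, hnn 2, hnn 3]

lemma sqRNN_out_eq {D x : ℝ} (hy : |x / D| ∈ Set.Icc 0 1) (t : ℕ) :
    (sqRNN D).out (fun _ => x) t 0 = D ^ 2 * (|x / D| ^ 2 + sqError |x / D| t) := by
  have hs := isSqRNNState_hid hy t
  rw [sqRNN_out, hs.val, hs.acc, sqError]; ring

/-- Theorem (squaring RNN): for every `D ≥ 1` there is an RNN with input dimension 1,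
output dimension 1, and hidden state size 7 such that for all `x ∈ [−D, D]` and `t ∈ ℕ₀`:
`|(R 𝒟 x)[t] − x²| ≤ (D²/4)·4^{−t}`, `‖(K 𝒟 x)[t]‖∞ ≤ 1`, and `0 ≤ (R 𝒟 x)[t] ≤ D²`. -/
theorem stmt2 (D : ℝ) (hD : 1 ≤ D) :
    ∃ R : RNN (Fin 1) (Fin 7) (Fin 1),
      ∀ x : ℝ, x ∈ Set.Icc (-D) D → ∀ t : ℕ,
        |R.out (fun _ => x) t 0 - x ^ 2| ≤ D ^ 2 / 4 * (4 : ℝ) ^ (-(t : ℤ)) ∧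
        ‖R.hid (fun _ => x) t‖ ≤ 1 ∧
        0 ≤ R.out (fun _ => x) t 0 ∧ R.out (fun _ => x) t 0 ≤ D ^ 2 := by
  have hD0 : 0 < D := by linarith
  refine ⟨sqRNN D, fun x hx t => ?_⟩
  have hy : |x / D| ∈ Set.Icc 0 1 :=
    ⟨abs_nonneg _, by rw [abs_div, abs_of_pos hD0, div_le_one hD0]; exact abs_le.2 hx⟩
  set y := |x / D|
  have hx2 : D ^ 2 * y ^ 2 = x ^ 2 := by
    rw [sq_abs, div_pow, mul_div_cancel₀ _ (by positivity)]
  have hout := sqRNN_out_eq hy t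
  have herr := sqError_nonneg hy t
  refine ⟨?_, (isSqRNNState_hid hy t).norm_le_one hy ((sqRNN D).hid_nonneg _ t),
    by rw [hout]; positivity, ?_⟩
  · rw [hout, mul_add, hx2, add_sub_cancel_left, abs_of_nonneg (by positivity), zpow_neg,
      zpow_natCast, ← inv_pow]
    calc D ^ 2 * sqError y t ≤ D ^ 2 * (4⁻¹ ^ t / 4) := by gcongr; exact sqError_le y t
      _ = D ^ 2 / 4 * 4⁻¹ ^ t := by ring
  · calc _ = D ^ 2 * (y ^ 2 + sqError y t) := hout
      _ ≤ D ^ 2 * 1 := by gcongr; linarith [sq_add_sqError_le hy t, hy.2]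
      _ = D ^ 2 := mul_one _
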